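/- The map appending the digit 1 on the right, sending x_1...x_k to x_1...x_k 1, is a bijection from the set of hyperbinary expansions of m to the set of hyperbinary expansions of 2m+1. -/
import Mathlib


/-- The integer represented by a word of digits (most significant first). -/
def hval (w : List ℕ) : ℕ := w.foldl (fun a d => 2 * a + d) 0

/-- `w` is a hyperbinary expansion of `n`: digits in {0,1,2}, nonzero leading
digit, representing `n`.  (The empty word is the unique expansion of `0`.) -/
def IsHyp (n : ℕ) (w : List ℕ) : Prop :=
  (∀ d ∈ w, d ≤ 2) ∧ w.head? ≠ some 0 ∧ hval w = n

/-- `b n`: the number of hyperbinary expansions of `n` (so `b 0 = 1`). -/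
noncomputable def hb (n : ℕ) : ℕ := Set.ncard {w : List ℕ | IsHyp n w}

/-- A single rewriting step: `02 → 10` or `12 → 20`, a leading `2` treated as `02`. -/
def Step (u v : List ℕ) : Prop :=
  (∃ x y : List ℕ, u = x ++ [0, 2] ++ y ∧ v = x ++ [1, 0] ++ y) ∨
  (∃ x y : List ℕ, u = x ++ [1, 2] ++ y ∧ v = x ++ [2, 0] ++ y) ∨
  (∃ y : List ℕ, u = 2 :: y ∧ v = 1 :: 0 :: y)

/-- Strict shortlex order: first by length, then lexicographically. -/
def Shortlex (u v : List ℕ) : Prop :=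
  u.length < v.length ∨ (u.length = v.length ∧ List.Lex (· < ·) u v)

/-- Number of maximal blocks of consecutive `2`'s in a word. -/
def blocks2 : List ℕ → ℕ
  | [] => 0
  | d :: rest => blocks2 rest + (if d = 2 ∧ rest.head? ≠ some 2 then 1 else 0)


lemma hval_append_one (w : List ℕ) (d : ℕ) : hval (w ++ [d]) = 2 * hval w + d := by
  simp [hval, List.foldl_append]

lemma hval_pos_ne_nil {w : List ℕ} (h : hval w ≠ 0) : w ≠ [] := by
  rintro rfl; exact h rfl

lemma head?_append_one {w : List ℕ} (hw : w ≠ []) (d : ℕ) :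
    (w ++ [d]).head? = w.head? := by
  cases w with
  | nil => exact absurd rfl hw
  | cons a t => rfl

theorem stmt5 (m : ℕ) (hm : 0 < m) :
    Set.BijOn (fun w : List ℕ => w ++ [1])
      {w | IsHyp m w} {w | IsHyp (2 * m + 1) w} := by
  refine ⟨?_, ?_, ?_⟩
  · rintro w ⟨hd, hh, hv⟩
    refine ⟨?_, ?_, ?_⟩
    · intro d hdm
      rcases List.mem_append.1 hdm with h | h
      · exact hd d h
      · simp at h; omega
    · have hw : w ≠ [] := hval_pos_ne_nil (by rw [hv]; omega)
      rw [head?_append_one hw]; exact hh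
    · rw [hval_append_one, hv]
  · intro u hu v hv h
    exact List.append_cancel_right h
  · rintro v ⟨hd, hh, hv⟩
    have hv0 : v ≠ [] := hval_pos_ne_nil (by rw [hv]; omega)
    obtain ⟨w, d, rfl⟩ : ∃ w d, v = w ++ [d] := by
      rcases List.eq_nil_or_concat v with h | ⟨w, d, h⟩
      · exact absurd h hv0
      · exact ⟨w, d, by simpa using h⟩
    rw [hval_append_one] at hv
    have hd2 : d ≤ 2 := hd d (by simp)
    have hd1 : d = 1 := by omega
    subst hd1
    have hwm : hval w = m := by omega
    have hwne : w ≠ [] := hval_pos_ne_nil (by rw [hwm]; omega)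
    refine ⟨w, ⟨fun e he => hd e (by simp [he]), ?_, hwm⟩, rfl⟩
    rw [head?_append_one hwne] at hh
    exact hh
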